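/- For C ≥ 2 and C−1 ≤ ρ₁ < C, the function Φ(z) = (1/z)·(ρ₁+Cz)^C/C! − Σ_{m=0}^{C−1} (ρ₁+Cz)^m/m! is strictly positive for all z > 0, hence has no root. -/

import Mathlib

/-!
Put `x = ρ₁ + C z` and `S = ∑_{m<C} x^m/m!`. The sum `∑_{m<C} (x - m) x^m/m!` telescopes to
`C x^C/C!`, so `(x - (C - 1)) S` falls short of `C x^C/C!` by `∑_{m<C} (C - 1 - m) x^m/m!`,
which is at least its `m = 0` term `C - 1 > 0`. Since `ρ₁ ≥ C - 1` gives `C z ≤ x - (C - 1)`,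
this yields `C z S < C x^C/C!`, i.e. `S < x^C/(z C!)`.
-/

open Real Set

theorem sum_range_sub_mul_pow_div_factorial (x : ℝ) (n : ℕ) :
    ∑ m ∈ Finset.range n, (x - m) * x ^ m / m.factorial = n * x ^ n / n.factorial := by
  have h := Finset.sum_range_sub (fun m : ℕ => (m : ℝ) * x ^ m / m.factorial) n
  simp only [Nat.cast_zero, zero_mul, zero_div, sub_zero] at h
  rw [← h]
  refine Finset.sum_congr rfl fun m _ => ?_
  rw [Nat.factorial_succ, Nat.cast_mul, pow_succ]
  push_cast
  field_simp

theorem sub_mul_sum_range_pow_div_factorial_lt {x : ℝ} (hx : 0 ≤ x) {n : ℕ} (hn : 2 ≤ n) :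
    (x - (n - 1)) * ∑ m ∈ Finset.range n, x ^ m / m.factorial < n * x ^ n / n.factorial := by
  have hdefect : (n * x ^ n / n.factorial : ℝ) - (x - (n - 1)) *
      ∑ m ∈ Finset.range n, x ^ m / m.factorial
      = ∑ m ∈ Finset.range n, ((n : ℝ) - 1 - m) * x ^ m / m.factorial := by
    rw [← sum_range_sub_mul_pow_div_factorial, Finset.mul_sum, ← Finset.sum_sub_distrib]
    exact Finset.sum_congr rfl fun m _ => by ring
  have hterm_nonneg : ∀ m ∈ Finset.range n, 0 ≤ ((n : ℝ) - 1 - m) * x ^ m / m.factorial := by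
    intro m hm
    have : (m : ℝ) + 1 ≤ n := by exact_mod_cast Finset.mem_range.mp hm
    have : 0 ≤ (n : ℝ) - 1 - m := by linarith
    positivity
  have hfirst := Finset.single_le_sum hterm_nonneg (Finset.mem_range.mpr (by omega : 0 < n))
  have hn' : (2 : ℝ) ≤ n := by exact_mod_cast hn
  simp only [Nat.cast_zero, sub_zero, pow_zero, mul_one, Nat.factorial_zero, Nat.cast_one,
    div_one] at hfirst
  linarith

theorem stmt_4_general (C : ℕ) (hC : 2 ≤ C) (ρ₁ : ℝ) (hρ₁ : (C : ℝ) - 1 ≤ ρ₁)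
    (Φ : ℝ → ℝ)
    (hΦ : ∀ z : ℝ, Φ z = (1 / z) * (ρ₁ + (C : ℝ) * z) ^ C / (Nat.factorial C : ℝ)
        - ∑ m ∈ Finset.range C, (ρ₁ + (C : ℝ) * z) ^ m / (Nat.factorial m : ℝ)) :
    ∀ z : ℝ, 0 < z → 0 < Φ z := by
  intro z hz
  set x := ρ₁ + (C : ℝ) * z with hx_def
  set S := ∑ m ∈ Finset.range C, x ^ m / (Nat.factorial m : ℝ)
  have hC' : (2 : ℝ) ≤ C := by exact_mod_cast hC
  have hCz : 0 < (C : ℝ) * z := by positivity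
  have hx : 0 ≤ x := by linarith
  have hS : 0 ≤ S := Finset.sum_nonneg fun m _ => by positivity
  have hbound : (C * z) * S < C * (x ^ C / C.factorial) := calc
    (C * z) * S ≤ (x - (C - 1)) * S := by gcongr; linarith
    _ < C * x ^ C / C.factorial := sub_mul_sum_range_pow_div_factorial_lt hx hC
    _ = C * (x ^ C / C.factorial) := mul_div_assoc _ _ _
  have hzS : z * S < x ^ C / C.factorial := by
    rw [mul_assoc] at hbound
    exact lt_of_mul_lt_mul_left hbound (Nat.cast_nonneg C)
  rw [hΦ, sub_pos, mul_div_assoc, one_div_mul_eq_div, lt_div_iff₀ hz, mul_comm]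
  exact hzS

theorem stmt_4 (C : ℕ) (hC : 2 ≤ C) (ρ₁ : ℝ) (hρ₁ : (C : ℝ) - 1 ≤ ρ₁) (hρ₁C : ρ₁ < C)
    (Φ : ℝ → ℝ)
    (hΦ : ∀ z : ℝ, Φ z = (1 / z) * (ρ₁ + (C : ℝ) * z) ^ C / (Nat.factorial C : ℝ)
        - ∑ m ∈ Finset.range C, (ρ₁ + (C : ℝ) * z) ^ m / (Nat.factorial m : ℝ)) :
    ∀ z : ℝ, 0 < z → 0 < Φ z :=
  stmt_4_general C hC ρ₁ hρ₁ Φ hΦ
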